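/- In the category of R-modules, Ext¹_R(Z_e, Z_e) = 0 and Ext¹_R(Z_o, Z_o) = 0. -/

import Mathlib

open Polynomial

noncomputable section

/-- The ring `R = ℤ[ξ]/(ξ²−1)`. -/
abbrev Runf : Type := ℤ[X] ⧸ Ideal.span {(X : ℤ[X]) ^ 2 - 1}

/-- The class of `ξ` in `R`. -/
def xi : Runf := Ideal.Quotient.mk _ X

/-- The ring homomorphism `eval₁ : R → ℤ` sending the class of `ξ` to `1`. -/
def evalOne : Runf →+* ℤ :=
  Ideal.Quotient.lift _ (evalRingHom 1) (fun a ha => by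
    obtain ⟨b, rfl⟩ := Ideal.mem_span_singleton.mp ha
    simp)

/-- The ring homomorphism `eval₋₁ : R → ℤ` sending the class of `ξ` to `-1`. -/
def evalNegOne : Runf →+* ℤ :=
  Ideal.Quotient.lift _ (evalRingHom (-1)) (fun a ha => by
    obtain ⟨b, rfl⟩ := Ideal.mem_span_singleton.mp ha
    simp)


/-- `Z_e`: the integers regarded as an `R`-module via `eval₁` (so `ξ` acts as `+1`). -/
def Ze : Type := ℤ

/-- `Z_o`: the integers regarded as an `R`-module via `eval₋₁` (so `ξ` acts as `−1`). -/
def Zo : Type := ℤ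

instance : AddCommGroup Ze := inferInstanceAs (AddCommGroup ℤ)
instance : AddCommGroup Zo := inferInstanceAs (AddCommGroup ℤ)

instance : Module Runf Ze := Module.compHom ℤ evalOne
instance : Module Runf Zo := Module.compHom ℤ evalNegOne
open CategoryTheory

/-!
The pair `(ξ - 1, ξ + 1)` is an exact pair of zero divisors in `R`: the annihilator of each is the
principal ideal generated by the other. Hence `Z_e ≅ R ⧸ (ξ - 1)` has the 2-periodic free
resolution `⋯ → R --(ξ+1)--> R --(ξ-1)--> R → Z_e`, and a cocycle of `Hom(-, N)` in degree one is
a map `R → N` killed by precomposition with `ξ + 1`; it vanishes as soon as `ξ + 1` acts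
injectively on `N`. On `Z_e` it acts as `2`. For `Z_o` the roles of `ξ - 1` and `ξ + 1` are
swapped, and `ξ - 1` acts as `-2`.
-/

open Limits

universe u

section PeriodicResolution

variable {R : Type u} [CommRing R]

/-- An exact pair of zero divisors, without the usual requirement that `a` and `b` be nonzero
nonunits. -/
structure IsExactPair (a b : R) : Prop where
  mul_eq_zero_iff_left : ∀ x, a * x = 0 ↔ b ∣ x
  mul_eq_zero_iff_right : ∀ x, b * x = 0 ↔ a ∣ x

namespace IsExactPair

variable {a b : R}

lemma symm (h : IsExactPair a b) : IsExactPair b a :=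
  ⟨h.mul_eq_zero_iff_right, h.mul_eq_zero_iff_left⟩

lemma mul_eq_zero (h : IsExactPair a b) : a * b = 0 :=
  (h.mul_eq_zero_iff_left b).2 dvd_rfl

lemma exact_mulLeft (h : IsExactPair a b) :
    (ShortComplex.mk (ModuleCat.ofHom (LinearMap.mulLeft R b))
      (ModuleCat.ofHom (LinearMap.mulLeft R a)) (by ext; simp [h.mul_eq_zero])).Exact := by
  rw [ShortComplex.moduleCat_exact_iff]
  intro x hx
  obtain ⟨y, rfl⟩ := (h.mul_eq_zero_iff_left x).1 hx
  exact ⟨y, rfl⟩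

end IsExactPair

/-- The complex `⋯ → R --b--> R --a--> R --b--> R --a--> R`, with `d (n + 1) n` equal to
multiplication by `a` for even `n` and by `b` for odd `n`. -/
abbrev periodicComplex (a b : R) (hab : a * b = 0) : ChainComplex (ModuleCat.{u} R) ℕ :=
  HomologicalComplex.alternatingConst (ModuleCat.of R R)
    (φ := ModuleCat.ofHom (LinearMap.mulLeft R b)) (ψ := ModuleCat.ofHom (LinearMap.mulLeft R a))
    (by ext; simp [hab]) (by ext; simp [mul_comm b a, hab])
    fun _ _ => ComplexShape.down_nat_odd_add

variable {a b : R} {M : Type u} [AddCommGroup M] [Module R M] {m₀ : M}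

lemma periodicComplex_exactAt_succ (h : IsExactPair a b) (n : ℕ) :
    (periodicComplex a b h.mul_eq_zero).ExactAt (n + 1) := by
  rw [HomologicalComplex.exactAt_iff' _ (n + 2) (n + 1) n (by simp) (by simp)]
  rcases (n + 1).even_or_odd with hn | hn
  · exact ShortComplex.exact_of_iso
      (HomologicalComplex.alternatingConstScIsoEven _ _ _ _ rfl rfl hn).symm h.symm.exact_mulLeft
  · exact ShortComplex.exact_of_iso
      (HomologicalComplex.alternatingConstScIsoOdd _ _ _ _ rfl rfl hn).symm h.exact_mulLeft

variable (m₀) in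
def periodicAugmentation (hab : a * b = 0) (hm₀ : a • m₀ = 0) :
    periodicComplex a b hab ⟶ (ChainComplex.single₀ (ModuleCat R)).obj (ModuleCat.of R M) :=
  (ChainComplex.toSingle₀Equiv _ _).symm
    ⟨ModuleCat.ofHom (LinearMap.toSpanSingleton R M m₀), by
      ext
      change (a * 1) • m₀ = 0
      rw [mul_one, hm₀]⟩

variable (m₀) in
def periodicResolution (h : IsExactPair a b) (hker : ∀ r : R, r • m₀ = 0 ↔ a ∣ r)
    (hspan : Function.Surjective (LinearMap.toSpanSingleton R M m₀)) :
    ProjectiveResolution (ModuleCat.of R M) where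
  complex := periodicComplex a b h.mul_eq_zero
  projective _ := ModuleCat.projective_of_free (Module.Basis.singleton PUnit.{u + 1} R)
  π := periodicAugmentation m₀ h.mul_eq_zero ((hker a).2 dvd_rfl)
  quasiIso := ⟨fun
    | 0 => by
      rw [ChainComplex.quasiIsoAt₀_iff, ShortComplex.quasiIso_iff_of_zeros' _ rfl rfl rfl]
      refine ⟨?_, (ModuleCat.epi_iff_surjective _).2 hspan⟩
      rw [ShortComplex.moduleCat_exact_iff]
      intro x hx
      obtain ⟨y, rfl⟩ := (hker x).1 hx
      exact ⟨y, rfl⟩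
    | n + 1 => by
      rw [quasiIsoAt_iff_exactAt' (hL := ChainComplex.exactAt_succ_single_obj ..)]
      exact periodicComplex_exactAt_succ h n⟩

lemma ModuleCat.eq_zero_of_mulLeft_comp_eq_zero {N : Type u} [AddCommGroup N] [Module R N]
    (hN : ∀ n : N, b • n = 0 → n = 0) (f : ModuleCat.of R R ⟶ ModuleCat.of R N)
    (hf : ModuleCat.ofHom (LinearMap.mulLeft R b) ≫ f = 0) : f = 0 := by
  ext
  exact hN _ (by simpa [← map_smul] using congr($hf 1))

lemma subsingleton_ext_one_of_isExactPair (h : IsExactPair a b)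
    (hker : ∀ r : R, r • m₀ = 0 ↔ a ∣ r)
    (hspan : Function.Surjective (LinearMap.toSpanSingleton R M m₀))
    {N : Type u} [AddCommGroup N] [Module R N] (hN : ∀ n : N, b • n = 0 → n = 0) :
    Subsingleton (((Ext R (ModuleCat.{u} R) 1).obj (Opposite.op (ModuleCat.of R M))).obj
      (ModuleCat.of R N)) := by
  rw [← ModuleCat.isZero_iff_subsingleton]
  refine IsZero.of_iso ?_ ((periodicResolution m₀ h hker hspan).isoExt 1 _)
  rw [← HomologicalComplex.exactAt_iff_isZero_homology,
    HomologicalComplex.exactAt_iff' _ 0 1 2 (by simp) (by simp), ShortComplex.moduleCat_exact_iff]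
  intro f hf
  exact ⟨0, (map_zero _).trans (ModuleCat.eq_zero_of_mulLeft_comp_eq_zero hN f hf).symm⟩

end PeriodicResolution

lemma Ideal.Quotient.mk_mul_eq_zero_iff_dvd {D : Type*} [CommRing D] [IsDomain D] {f u v : D}
    (hu : u ≠ 0) (huv : u * v = f) (x : D ⧸ Ideal.span {f}) :
    Ideal.Quotient.mk _ u * x = 0 ↔ Ideal.Quotient.mk _ v ∣ x := by
  obtain ⟨p, rfl⟩ := Ideal.Quotient.mk_surjective x
  constructor
  · intro hp
    rw [← map_mul, Ideal.Quotient.eq_zero_iff_mem, Ideal.mem_span_singleton, ← huv,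
      mul_dvd_mul_iff_left hu] at hp
    exact map_dvd _ hp
  · rintro ⟨y, hy⟩
    rw [hy, ← mul_assoc, ← map_mul, huv,
      Ideal.Quotient.eq_zero_iff_mem.2 (Ideal.mem_span_singleton_self f), zero_mul]

lemma Ideal.Quotient.isExactPair_mk_of_mul_eq {D : Type*} [CommRing D] [IsDomain D] {f u v : D}
    (hu : u ≠ 0) (hv : v ≠ 0) (huv : u * v = f) :
    IsExactPair (Ideal.Quotient.mk (Ideal.span {f}) u) (Ideal.Quotient.mk _ v) :=
  ⟨mk_mul_eq_zero_iff_dvd hu huv, mk_mul_eq_zero_iff_dvd hv (mul_comm v u ▸ huv)⟩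

lemma Polynomial.quotient_lift_evalRingHom_eq_zero_iff {S : Type*} [CommRing S] {I : Ideal S[X]}
    (c : S) (hI : ∀ p ∈ I, evalRingHom c p = 0) (x : S[X] ⧸ I) :
    Ideal.Quotient.lift I (evalRingHom c) hI x = 0 ↔ Ideal.Quotient.mk I (X - C c) ∣ x := by
  obtain ⟨p, rfl⟩ := Ideal.Quotient.mk_surjective x
  constructor
  · intro hp
    obtain ⟨q, hq⟩ : X - C c ∣ p := dvd_iff_isRoot.2 (by simpa using hp)
    exact ⟨Ideal.Quotient.mk I q, by rw [hq, map_mul]⟩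
  · rintro ⟨y, hy⟩
    simp [hy]

lemma isExactPair_xi_sub_one_xi_add_one : IsExactPair (xi - 1) (xi + 1) := by
  simpa [xi] using Ideal.Quotient.isExactPair_mk_of_mul_eq (X_sub_C_ne_zero 1)
    (X_add_C_ne_zero 1) (show (X - C 1) * (X + C 1) = (X : ℤ[X]) ^ 2 - 1 by simp; ring)

lemma evalOne_eq_zero_iff (r : Runf) : evalOne r = 0 ↔ xi - 1 ∣ r := by
  rw [evalOne, quotient_lift_evalRingHom_eq_zero_iff]
  simp [xi]

lemma evalNegOne_eq_zero_iff (r : Runf) : evalNegOne r = 0 ↔ xi + 1 ∣ r := by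
  rw [evalNegOne, quotient_lift_evalRingHom_eq_zero_iff]
  simp [xi]

lemma evalOne_xi : evalOne xi = 1 := by simp [evalOne, xi]

lemma evalNegOne_xi : evalNegOne xi = -1 := by simp [evalNegOne, xi]

theorem subsingleton_ext_one_Ze :
    Subsingleton (((Ext Runf (ModuleCat Runf) 1).obj (Opposite.op (ModuleCat.of Runf Ze))).obj
      (ModuleCat.of Runf Ze)) := by
  refine subsingleton_ext_one_of_isExactPair isExactPair_xi_sub_one_xi_add_one
    (M := Ze) (m₀ := (1 : ℤ)) (fun r => ?_) (fun (n : ℤ) => ⟨n, ?_⟩) (fun (n : ℤ) hn => ?_)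
  · change evalOne r * 1 = 0 ↔ _
    rw [mul_one, evalOne_eq_zero_iff]
  · change evalOne n * 1 = n
    simp
  · change evalOne (xi + 1) * n = 0 at hn
    rw [map_add, evalOne_xi, map_one] at hn
    change n = 0
    omega

theorem subsingleton_ext_one_Zo :
    Subsingleton (((Ext Runf (ModuleCat Runf) 1).obj (Opposite.op (ModuleCat.of Runf Zo))).obj
      (ModuleCat.of Runf Zo)) := by
  refine subsingleton_ext_one_of_isExactPair isExactPair_xi_sub_one_xi_add_one.symm
    (M := Zo) (m₀ := (1 : ℤ)) (fun r => ?_) (fun (n : ℤ) => ⟨n, ?_⟩) (fun (n : ℤ) hn => ?_)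
  · change evalNegOne r * 1 = 0 ↔ _
    rw [mul_one, evalNegOne_eq_zero_iff]
  · change evalNegOne n * 1 = n
    simp
  · change evalNegOne (xi - 1) * n = 0 at hn
    rw [map_sub, evalNegOne_xi, map_one] at hn
    change n = 0
    omega

/-- `Ext¹_R(Z_e, Z_e) = 0` and `Ext¹_R(Z_o, Z_o) = 0`. -/
theorem stmt_9 :
    Subsingleton
      ((((_root_.Ext Runf (ModuleCat Runf) 1).obj
          (Opposite.op (ModuleCat.of Runf Ze))).obj (ModuleCat.of Runf Ze))) ∧
    Subsingleton
      ((((_root_.Ext Runf (ModuleCat Runf) 1).obj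
          (Opposite.op (ModuleCat.of Runf Zo))).obj (ModuleCat.of Runf Zo))) :=
  ⟨subsingleton_ext_one_Ze, subsingleton_ext_one_Zo⟩

end
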